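/- Let W ⊆ (ℝmax^n)^2 be either a closed congruence or a closed polar cone. Then for all f, g ∈ ℝmax^n with (f,g) ∈ W and every h ∈ ℝmax^n, one has g∖h̄ ≤ f∖h̄. -/

import Mathlib

open scoped Classical

noncomputable section

/-- The max-plus semiring `ℝmax = ℝ ∪ {-∞}`. Its `Add` is the max-plus
"multiplication" `a ⊗ b = a + b` (with `-∞` absorbing), its `max` is the
max-plus "addition". -/
abbrev Rmax := WithBot ℝ

/-- The order topology on `WithBot ℝ` (the topology of the metric
`d(a,b) = |exp a - exp b|`). -/
instance : TopologicalSpace Rmax := Preorder.topology Rmax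
instance : OrderTopology Rmax := ⟨rfl⟩

/-- Vectors of the max-plus semimodule `ℝmax^n`. -/
abbrev RmaxVec (n : ℕ) := Fin n → Rmax

/-- The max-plus linear combination `xλ ⊕ yμ`. -/
def maxComb {n : ℕ} (x y : RmaxVec n) (lam mu : Rmax) : RmaxVec n :=
  fun i => max (x i + lam) (y i + mu)

/-- `V ⊆ ℝmax^n` is a (max-plus) subsemimodule. -/
def IsSubsemimodule {n : ℕ} (V : Set (RmaxVec n)) : Prop :=
  ∀ x ∈ V, ∀ y ∈ V, ∀ lam mu : Rmax, maxComb x y lam mu ∈ V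

/-- `W ⊆ (ℝmax^n)² ≅ ℝmax^{2n}` is a (max-plus) subsemimodule,
with the entrywise operations. -/
def IsSubsemimodulePair {n : ℕ} (W : Set (RmaxVec n × RmaxVec n)) : Prop :=
  ∀ p ∈ W, ∀ q ∈ W, ∀ lam mu : Rmax,
    (maxComb p.1 q.1 lam mu, maxComb p.2 q.2 lam mu) ∈ W

/-- A pre-congruence: a subsemimodule of `(ℝmax^n)²` containing the diagonal
and transitive. -/
def IsPrecongruence {n : ℕ} (W : Set (RmaxVec n × RmaxVec n)) : Prop :=
  IsSubsemimodulePair W ∧ (∀ f : RmaxVec n, (f, f) ∈ W) ∧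
    ∀ f g h : RmaxVec n, (f, g) ∈ W → (g, h) ∈ W → (f, h) ∈ W

/-- A polar cone: a pre-congruence such that `f ≤ g` implies `(f,g) ∈ W`. -/
def IsPolarCone {n : ℕ} (W : Set (RmaxVec n × RmaxVec n)) : Prop :=
  IsPrecongruence W ∧ ∀ f g : RmaxVec n, f ≤ g → (f, g) ∈ W

/-- A congruence: a symmetric pre-congruence. -/
def IsCongruence {n : ℕ} (W : Set (RmaxVec n × RmaxVec n)) : Prop :=
  IsPrecongruence W ∧ ∀ f g : RmaxVec n, (f, g) ∈ W → (g, f) ∈ W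

/-- The max-plus bracket `⟨y, x⟩ = max_i (y_i + x_i)`. -/
def mpBracket {n : ℕ} (y x : RmaxVec n) : Rmax :=
  Finset.univ.sup fun i => y i + x i

/-- The polar `V°` of `V ⊆ ℝmax^n`. -/
def mpPolar {n : ℕ} (V : Set (RmaxVec n)) : Set (RmaxVec n × RmaxVec n) :=
  { p | ∀ x ∈ V, mpBracket p.1 x ≤ mpBracket p.2 x }

/-- The orthogonal `V⊥` of `V ⊆ ℝmax^n`. -/
def mpOrtho {n : ℕ} (V : Set (RmaxVec n)) : Set (RmaxVec n × RmaxVec n) :=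
  { p | ∀ x ∈ V, mpBracket p.1 x = mpBracket p.2 x }

/-- The dual polar `W⋄` of `W ⊆ (ℝmax^n)²`. -/
def mpDiamond {n : ℕ} (W : Set (RmaxVec n × RmaxVec n)) : Set (RmaxVec n) :=
  { x | ∀ p ∈ W, mpBracket p.1 x ≤ mpBracket p.2 x }

/-- The dual orthogonal `W⊤` of `W ⊆ (ℝmax^n)²`. -/
def mpTop {n : ℕ} (W : Set (RmaxVec n × RmaxVec n)) : Set (RmaxVec n) :=
  { x | ∀ p ∈ W, mpBracket p.1 x = mpBracket p.2 x }

/-- The canonical embedding of `ℝmax = ℝ ∪ {-∞}` into `EReal = ℝ ∪ {±∞}`. -/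
def toE : Rmax → EReal := WithBot.recBotCoe ⊥ (fun x => (x : EReal))

/-- The entrywise supremum `ḡ ∈ EReal^n` of `{ f | (f,g) ∈ W }`,
computed in `EReal`. -/
def ebar {n : ℕ} (W : Set (RmaxVec n × RmaxVec n)) (g : RmaxVec n) :
    Fin n → EReal :=
  fun i => sSup { a : EReal | ∃ f : RmaxVec n, (f, g) ∈ W ∧ a = toE (f i) }

/-- The residuation `u∖x = sSup { λ | ∀ i, u_i + λ ≤ x_i }` in `EReal`. -/
def eres {n : ℕ} (u x : Fin n → EReal) : EReal :=
  sSup { lam : EReal | ∀ i, u i + lam ≤ x i }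

/-- `z^β`: the vector in `ℝmax^n` obtained from `z ∈ EReal^n` by replacing the
entries equal to `+∞` by `β` and keeping the other entries. -/
def cut {n : ℕ} (z : Fin n → EReal) (b : Rmax) : RmaxVec n :=
  fun i => if z i = ⊤ then b else if z i = ⊥ then ⊥ else ((z i).toReal : ℝ)

/-!
Fix `h` and a real `c < λ` with `g + λ ≤ h̄`. Each coordinate of `g + c` is dominated by some
`w` with `(w, h) ∈ W`, and since `{w | (w, h) ∈ W}` is closed under `⊔` and contains `h`, a
single `v` with `(v, h) ∈ W` dominates `g + c`. Combining `(f + c, g + c) ∈ W` with `(v, v)`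
gives `((f + c) ⊔ v, v) ∈ W`, so by transitivity `((f + c) ⊔ v, h) ∈ W`, i.e. `f + c ≤ h̄`.
Letting `c` increase to `λ` gives `g∖h̄ ≤ f∖h̄`.
-/

lemma toE_mono : Monotone toE := by
  intro a b hab
  induction a using WithBot.recBotCoe with
  | bot => exact bot_le
  | coe r =>
    induction b using WithBot.recBotCoe with
    | bot => exact absurd hab (WithBot.not_coe_le_bot r)
    | coe s => exact EReal.coe_le_coe_iff.mpr (WithBot.coe_le_coe.mp hab)

lemma toE_coe (r : ℝ) : toE r = r := rfl

lemma toE_add_coe (x : Rmax) (c : ℝ) : toE (x + c) = toE x + c := by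
  induction x using WithBot.recBotCoe with
  | bot => exact (EReal.bot_add _).symm
  | coe r => exact EReal.coe_add r c

lemma EReal.sSup_le_sSup_of_forall_coe_lt {S T : Set EReal}
    (hST : ∀ x ∈ S, ∀ c : ℝ, (c : EReal) < x → (c : EReal) ∈ T) : sSup S ≤ sSup T :=
  sSup_le fun x hx => EReal.ge_of_forall_gt_iff_ge.1 fun c hc => le_sSup (hST x hx c hc)

lemma maxComb_zero_zero {n : ℕ} (x y : RmaxVec n) : maxComb x y 0 0 = x ⊔ y := by
  funext i
  simp only [maxComb, add_zero, Pi.sup_apply]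

lemma toE_le_ebar {n : ℕ} {W : Set (RmaxVec n × RmaxVec n)} {f h : RmaxVec n}
    (hfh : (f, h) ∈ W) (i : Fin n) : toE (f i) ≤ ebar W h i :=
  le_sSup ⟨f, hfh, rfl⟩

lemma exists_mem_le_of_toE_lt_ebar {n : ℕ} {W : Set (RmaxVec n × RmaxVec n)} {h : RmaxVec n}
    {i : Fin n} {x : Rmax} (hx : toE x < ebar W h i) : ∃ w, (w, h) ∈ W ∧ x ≤ w i := by
  obtain ⟨_, ⟨w, hwh, rfl⟩, hlt⟩ := lt_sSup_iff.mp hx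
  exact ⟨w, hwh, (toE_mono.reflect_lt hlt).le⟩

namespace IsSubsemimodulePair

variable {n : ℕ} {W : Set (RmaxVec n × RmaxVec n)}

lemma sup_mem (hW : IsSubsemimodulePair W) {p q : RmaxVec n × RmaxVec n} (hp : p ∈ W)
    (hq : q ∈ W) : (p.1 ⊔ q.1, p.2 ⊔ q.2) ∈ W := by
  simpa only [maxComb_zero_zero] using hW p hp q hq 0 0

lemma exists_mem_forall_le (hW : IsSubsemimodulePair W) {h x : RmaxVec n} (hh : (h, h) ∈ W)
    (hx : ∀ i, ∃ w, (w, h) ∈ W ∧ x i ≤ w i) : ∃ v, (v, h) ∈ W ∧ x ≤ v := by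
  choose w hwh hxw using hx
  refine ⟨Finset.univ.sup w ⊔ h, ?_, fun i => ?_⟩
  · refine Finset.sup_induction (p := fun v => (v ⊔ h, h) ∈ W) (by simpa using hh) ?_
      (fun i _ => by simpa using hW.sup_mem (hwh i) hh)
    intro a ha b hb
    simpa [sup_sup_distrib_right] using hW.sup_mem ha hb
  · calc x i ≤ w i i := hxw i
      _ ≤ Finset.univ.sup w i := Finset.le_sup (f := w) (Finset.mem_univ i) i
      _ ≤ (Finset.univ.sup w ⊔ h) i := le_sup_left

end IsSubsemimodulePair

namespace IsPrecongruence

variable {n : ℕ} {W : Set (RmaxVec n × RmaxVec n)}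

lemma shift_sup_mem (hW : IsPrecongruence W) {f g v h : RmaxVec n} (hfg : (f, g) ∈ W)
    (hvh : (v, h) ∈ W) {c : Rmax} (hgv : ∀ i, g i + c ≤ v i) :
    ((fun i => f i + c) ⊔ v, h) ∈ W := by
  obtain ⟨hsub, hdiag, htrans⟩ := hW
  have hgcv : maxComb g v c 0 = v := funext fun i => by simpa [maxComb] using hgv i
  have hcomb := hsub (f, g) hfg (v, v) (hdiag v) c 0
  rw [hgcv] at hcomb
  convert htrans _ _ _ hcomb hvh using 2
  funext i
  simp [maxComb]

lemma add_coe_le_ebar (hW : IsPrecongruence W) {f g : RmaxVec n} (hfg : (f, g) ∈ W)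
    {h : RmaxVec n} {lam : EReal} (hg : ∀ i, toE (g i) + lam ≤ ebar W h i) {c : ℝ}
    (hc : (c : EReal) < lam) (i : Fin n) : toE (f i) + c ≤ ebar W h i := by
  have hdom : ∀ j, ∃ w, (w, h) ∈ W ∧ g j + c ≤ w j := by
    intro j
    induction hgj : g j using WithBot.recBotCoe with
    | bot => exact ⟨h, hW.2.1 h, by simp⟩
    | coe r =>
      refine exists_mem_le_of_toE_lt_ebar ?_
      calc toE (r + c) = r + c := toE_add_coe r c
        _ < r + lam := EReal.add_lt_add_left_coe hc r
        _ ≤ ebar W h j := by simpa only [hgj, toE_coe] using hg j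
  obtain ⟨v, hvh, hgv⟩ := hW.1.exists_mem_forall_le (hW.2.1 h) hdom
  calc toE (f i) + c = toE (f i + c) := (toE_add_coe _ _).symm
    _ ≤ toE (((fun j => f j + c) ⊔ v) i) := toE_mono le_sup_left
    _ ≤ ebar W h i := toE_le_ebar (hW.shift_sup_mem hfg hvh hgv) i

end IsPrecongruence

theorem res_ebar_antitone_general (n : ℕ) (W : Set (RmaxVec n × RmaxVec n))
    (hW : IsCongruence W ∨ IsPolarCone W)
    (f g : RmaxVec n) (hfg : (f, g) ∈ W) (h : RmaxVec n) :
    eres (fun i => toE (g i)) (ebar W h) ≤ eres (fun i => toE (f i)) (ebar W h) := by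
  have hpre : IsPrecongruence W := hW.elim And.left And.left
  exact EReal.sSup_le_sSup_of_forall_coe_lt fun _ hlam _ hc =>
    hpre.add_coe_le_ebar hfg hlam hc

/-- Lemma 4.4 of the paper: if `W ⊆ (ℝmax^n)²` is a closed congruence or a
closed polar cone, then `(f,g) ∈ W` implies `g∖h̄ ≤ f∖h̄` for all `h`. -/
theorem res_ebar_antitone (n : ℕ) (W : Set (RmaxVec n × RmaxVec n))
    (hclosed : IsClosed W) (hW : IsCongruence W ∨ IsPolarCone W)
    (f g : RmaxVec n) (hfg : (f, g) ∈ W) (h : RmaxVec n) :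
    eres (fun i => toE (g i)) (ebar W h) ≤ eres (fun i => toE (f i)) (ebar W h) :=
  res_ebar_antitone_general n W hW f g hfg h
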